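/- Under the DwMP matrix hypotheses, if c̄ ∈ ℝ^{n+m} satisfies (Ā c̄)_i ≤ 0 for 1 ≤ i ≤ n and c̄_i ≤ 0 for all n+1 ≤ i ≤ n+m, then c̄_i ≤ 0 for all 1 ≤ i ≤ n+m (discrete nonpositivity property). -/

import Mathlib

/-!
Testing the interior inequality against the positive part `v = (c_I)⁺` of the interior values:
on the support of `v` the nonpositive off-diagonal entries give `(A_II v)_i ≤ (A_II c_I)_i`,
and the boundary contribution `A_IB c_B` is nonnegative, so
`vᵀ A_II v ≤ vᵀ A_II c_I ≤ vᵀ (Ā c̄)_I ≤ 0`.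
Positive definiteness of `A_II` then forces `v = 0`.
-/

open Matrix

section ZMatrix

variable {ι : Type*} [Fintype ι] {B : Matrix ι ι ℝ}

theorem mulVec_posPart_le_of_pos (hB : Pairwise fun i j => B i j ≤ 0) {u : ι → ℝ} {i : ι}
    (hi : 0 < u i) : (B *ᵥ u⁺) i ≤ (B *ᵥ u) i := by
  refine Finset.sum_le_sum fun j _ => ?_
  rcases eq_or_ne i j with rfl | hij
  · simp [posPart_eq_self.mpr hi.le]
  · exact mul_le_mul_of_nonpos_left (le_posPart (u j)) (hB hij)

theorem posPart_dotProduct_mulVec_posPart_le (hB : Pairwise fun i j => B i j ≤ 0)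
    (u : ι → ℝ) : u⁺ ⬝ᵥ (B *ᵥ u⁺) ≤ u⁺ ⬝ᵥ (B *ᵥ u) := by
  refine Finset.sum_le_sum fun i _ => ?_
  rcases le_or_gt (u i) 0 with hi | hi
  · simp [posPart_eq_zero.mpr hi]
  · exact mul_le_mul_of_nonneg_left (mulVec_posPart_le_of_pos hB hi) (posPart_nonneg _)

theorem nonpos_of_mulVec_nonpos (hB : Pairwise fun i j => B i j ≤ 0)
    (hcop : ∀ x : ι → ℝ, 0 ≤ x → x ≠ 0 → 0 < x ⬝ᵥ (B *ᵥ x))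
    {u : ι → ℝ} (hu : B *ᵥ u ≤ 0) : u ≤ 0 := by
  by_contra hneg
  have hpos : u⁺ ≠ 0 := fun h => hneg (posPart_eq_zero.mp h)
  have hquad : u⁺ ⬝ᵥ (B *ᵥ u) ≤ 0 := by
    simpa using dotProduct_le_dotProduct_of_nonneg_left hu (posPart_nonneg u)
  exact (hcop _ (posPart_nonneg u) hpos).not_ge
    ((posPart_dotProduct_mulVec_posPart_le hB u).trans hquad)

end ZMatrix

theorem toBlocks₁₁_mulVec_le {ι κ ι' κ' : Type*} [Fintype ι'] [Fintype κ']
    (A : Matrix (ι ⊕ κ) (ι' ⊕ κ') ℝ) (hA : ∀ i j, A (Sum.inl i) (Sum.inr j) ≤ 0)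
    {c : ι' ⊕ κ' → ℝ} (hc : ∀ j, c (Sum.inr j) ≤ 0) :
    A.toBlocks₁₁ *ᵥ (c ∘ Sum.inl) ≤ (A *ᵥ c) ∘ Sum.inl := by
  intro i
  have hbdry : 0 ≤ ∑ j, A (Sum.inl i) (Sum.inr j) * c (Sum.inr j) :=
    Finset.sum_nonneg fun j _ => mul_nonneg_of_nonpos_of_nonpos (hA i j) (hc j)
  simp only [Function.comp_apply, mulVec, dotProduct, Fintype.sum_sum_type, toBlocks₁₁, of_apply]
  linarith

theorem discrete_nonpositivity_general {n m : ℕ}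
    (A : Matrix (Fin n ⊕ Fin m) (Fin n ⊕ Fin m) ℝ)
    (hoffdiag : ∀ (i : Fin n) (j : Fin n ⊕ Fin m),
      Sum.inl i ≠ j → A (Sum.inl i) j ≤ 0)
    (hposdef : ∀ x : Fin n → ℝ, x ≠ 0 →
      0 < ∑ i, ∑ j, x i * A (Sum.inl i) (Sum.inl j) * x j)
    (c : Fin n ⊕ Fin m → ℝ)
    (hc : ∀ i : Fin n, (A.mulVec c) (Sum.inl i) ≤ 0)
    (hbd : ∀ i : Fin m, c (Sum.inr i) ≤ 0) :
    ∀ k : Fin n ⊕ Fin m, c k ≤ 0 := by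
  have hZ : Pairwise fun i j => A.toBlocks₁₁ i j ≤ 0 := fun i j hij =>
    hoffdiag i (Sum.inl j) (Sum.inl_injective.ne hij)
  have hcop : ∀ x, 0 ≤ x → x ≠ 0 → 0 < x ⬝ᵥ (A.toBlocks₁₁ *ᵥ x) := fun x _ hx => by
    simpa [dotProduct, mulVec, toBlocks₁₁, Finset.mul_sum, mul_assoc] using hposdef x hx
  have hinterior : c ∘ Sum.inl ≤ 0 := nonpos_of_mulVec_nonpos hZ hcop
    ((toBlocks₁₁_mulVec_le A (fun i j => hoffdiag i (Sum.inr j) Sum.inl_ne_inr) hbd).trans hc)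
  rintro (i | j)
  · exact hinterior i
  · exact hbd j

/-- discrete nonpositivity property: under the DwMP matrix hypotheses,
`(Āc)_i ≤ 0` on interior rows and `c ≤ 0` on boundary indices imply `c ≤ 0`. -/
theorem discrete_nonpositivity {n m : ℕ} (hn : 0 < n) (hm : 0 < m)
    (A : Matrix (Fin n ⊕ Fin m) (Fin n ⊕ Fin m) ℝ)
    (hblock : ∀ (i : Fin m) (j : Fin n ⊕ Fin m),
      A (Sum.inr i) j = if Sum.inr i = j then 1 else 0)
    (hoffdiag : ∀ (i : Fin n) (j : Fin n ⊕ Fin m),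
      Sum.inl i ≠ j → A (Sum.inl i) j ≤ 0)
    (hrowsum : ∀ i : Fin n, 0 ≤ ∑ j, A (Sum.inl i) j)
    (hposdef : ∀ x : Fin n → ℝ, x ≠ 0 →
      0 < ∑ i, ∑ j, x i * A (Sum.inl i) (Sum.inl j) * x j)
    (c : Fin n ⊕ Fin m → ℝ)
    (hc : ∀ i : Fin n, (A.mulVec c) (Sum.inl i) ≤ 0)
    (hbd : ∀ i : Fin m, c (Sum.inr i) ≤ 0) :
    ∀ k : Fin n ⊕ Fin m, c k ≤ 0 :=
  discrete_nonpositivity_general A hoffdiag hposdef c hc hbd
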